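/- Let k ≥ 1 be an integer, F a field, S_1,…,S_k finite nonempty subsets of ℤ, and c : S_1 × ⋯ × S_k → F a nonzero coefficient array with support Γ. Then for every ε > 0 one has sliceRank(c^{⊗n}) ≤ exp((H(Γ) + ε)·n) for all sufficiently large n. -/

import Mathlib

/-!
If `c^{⊗n}(u) ≠ 0`, every column `(u_1(m), …, u_k(m))` lies in `Γ`, so the empirical distribution
of the columns is a candidate in the definition of `H(Γ)`, and its `i`-th marginal entropy is the
empirical entropy of the row `u_i`. Covering each nonzero entry `u` by the slice in the direction
`j` of its row of least empirical entropy, the slice rank is at most the number of rows `u_j` of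
empirical entropy `≤ H(Γ)`, summed over `j`. By the method of types there are at most
`(n + 1)^{|S_j|} e^{H(Γ) n}` such strings, and the polynomial factor is eventually below `e^{εn}`.
-/

open scoped BigOperators
open Classical

noncomputable section

namespace SlicePaper

/-- Shannon entropy of the `i`-th coordinate marginal of a distribution `p` on `Δ`. -/
def margEnt {ι : Type*} [Fintype ι] (Δ : Finset (ι → ℤ)) (p : (ι → ℤ) → ℝ) (i : ι) : ℝ :=
  -∑ α ∈ Δ.image (fun γ => γ i),
      (∑ γ ∈ Δ.filter (fun γ => γ i = α), p γ) *
        Real.log (∑ γ ∈ Δ.filter (fun γ => γ i = α), p γ)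

/-- The entropy `H(Δ)` of a finite set of integer tuples. -/
def HSet {ι : Type*} [Fintype ι] (Δ : Finset (ι → ℤ)) : ℝ :=
  sSup {e : ℝ | ∃ p : (ι → ℤ) → ℝ, (∀ γ, 0 ≤ p γ) ∧ (∀ γ, p γ ≠ 0 → γ ∈ Δ) ∧
    (∑ γ ∈ Δ, p γ) = 1 ∧ e = ⨅ i, margEnt Δ p i}

/-- Maximal elements of `Δ` w.r.t. the product of the linear orders `σ i`. -/
def maxElems {ι : Type*} [Fintype ι] (σ : ι → LinearOrder ℤ) (Δ : Finset (ι → ℤ)) :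
    Finset (ι → ℤ) :=
  Δ.filter (fun γ => ∀ δ ∈ Δ, (∀ i, (σ i).le (γ i) (δ i)) → γ = δ)

/-- `ξ k = log (k / (k-1)^((k-1)/k))`. -/
def xi (k : ℕ) : ℝ :=
  Real.log ((k : ℝ) / ((k : ℝ) - 1) ^ (((k : ℝ) - 1) / (k : ℝ)))

/-- Slice rank of a coefficient array `c`. -/
def sliceRank {k : ℕ} (F : Type*) [Field F] (τ : Fin k → Type*) [∀ i, Fintype (τ i)]
    (c : (∀ i, τ i) → F) : ℕ :=
  sInf {r : ℕ | ∃ j : Fin r → Fin k, ∃ a : ∀ l : Fin r, τ (j l) → F,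
    ∃ b : ∀ l : Fin r, (((i : {i : Fin k // i ≠ j l}) → τ i.1) → F),
    ∀ s : ∀ i, τ i, c s = ∑ l : Fin r, a l (s (j l)) * b l (fun i => s i.1)}

/-- `n`-th tensor power of a coefficient array. -/
def tpow {k : ℕ} {F : Type*} [Field F] {τ : Fin k → Type*} (c : (∀ i, τ i) → F) (n : ℕ) :
    (∀ i, Fin n → τ i) → F :=
  fun u => ∏ m : Fin n, c (fun i => u i m)

/-- Support of a coefficient array, as a finite set of integer tuples. -/
def support {k : ℕ} {F : Type*} [Field F] (S : Fin k → Finset ℤ)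
    (c : (∀ i, {x : ℤ // x ∈ S i}) → F) : Finset (Fin k → ℤ) :=
  (Finset.univ.filter (fun s : ∀ i, {x : ℤ // x ∈ S i} => c s ≠ 0)).image
    (fun s i => (s i : ℤ))

/-- Section `Γ_I^x`: restrictions to coordinates outside `I` of the γ ∈ Γ agreeing with x on I. -/
def sect {k : ℕ} (Γ : Finset (Fin k → ℤ)) (I : Finset (Fin k)) (x : Fin k → ℤ) :
    Finset ({i : Fin k // i ∉ I} → ℤ) :=
  (Γ.filter (fun γ => ∀ i ∈ I, γ i = x i)).image (fun γ i => γ i.1)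

/-- Section along a single coordinate. -/
def sect1 {k : ℕ} (Γ : Finset (Fin k → ℤ)) (i : Fin k) (a : ℤ) :
    Finset ({j : Fin k // j ≠ i} → ℤ) :=
  (Γ.filter (fun γ => γ i = a)).image (fun γ j => γ j.1)

/-- Trifferent set of strings. -/
def trifferent {n : ℕ} {α : Type*} (A : Finset (Fin n → α)) : Prop :=
  ∀ x ∈ A, ∀ y ∈ A, ∀ z ∈ A, x ≠ y → y ≠ z → x ≠ z →
    ∃ i, x i ≠ y i ∧ y i ≠ z i ∧ x i ≠ z i

/-- The cube root of unity `ω = e^{2πi/3}`. -/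
def w : ℂ := Complex.exp (2 * Real.pi * Complex.I / 3)

/-- The tensor `f_{x,y}(z,t)` used for the trifference problem. -/
def f {n : ℕ} (x y z t : Fin n → ℂ) : ℂ :=
  ∏ i, (x i + y i + z i) * (x i + y i + t i)

/-- Monomial functions `g_{α,β}`. -/
def g {n : ℕ} (α β : Fin n → ℕ) : (Fin n → ℂ) × (Fin n → ℂ) → ℂ :=
  fun q => ∏ i, (q.1 i + q.2 i) ^ α i * (q.1 i * q.2 i) ^ β i

open Finset Real Filter Asymptotics

section SliceRank

variable {k : ℕ} {F : Type*} [Field F] {τ : Fin k → Type*} [∀ i, Fintype (τ i)]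

theorem sliceRank_le_card {ι : Type*} [Fintype ι] (d : (∀ i, τ i) → F) (j : ι → Fin k)
    (a : ∀ l, τ (j l) → F) (b : ∀ l, ((i : {i : Fin k // i ≠ j l}) → τ i.1) → F)
    (hd : ∀ s, d s = ∑ l, a l (s (j l)) * b l (fun i => s i.1)) :
    sliceRank F τ d ≤ Fintype.card ι := by
  let e := (Fintype.equivFin ι).symm
  refine Nat.sInf_le ⟨fun l => j (e l), fun l => a (e l), fun l => b (e l), fun s => ?_⟩
  rw [hd s, ← e.sum_comp]

theorem sliceRank_le_sum_card_image [∀ i, DecidableEq (τ i)] (d : (∀ i, τ i) → F)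
    (J : (∀ i, τ i) → Fin k) :
    sliceRank F τ d ≤ ∑ j, #(image (· j) {s | d s ≠ 0 ∧ J s = j}) := by
  -- the entry `s` is covered by the slice in direction `J s` through the value `s (J s)`
  set A : ∀ j, Finset (τ j) := fun j => image (· j) {s | d s ≠ 0 ∧ J s = j}
  let glue (j : Fin k) (x : τ j) (y : (i : {i // i ≠ j}) → τ i.1) : ∀ i, τ i :=
    (Equiv.piSplitAt j τ).symm (x, y)
  have hglue : ∀ s j, glue j (s j) (fun i => s i.1) = s := fun s j =>
    (Equiv.piSplitAt j τ).symm_apply_apply s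
  calc sliceRank F τ d ≤ Fintype.card (Σ j, A j) := by
        refine sliceRank_le_card d (fun p => p.1) (fun p t => if t = p.2 then 1 else 0)
          (fun p y => if J (glue p.1 p.2 y) = p.1 then d (glue p.1 p.2 y) else 0) fun s => ?_
        have hterm : ∀ p : Σ j, A j, (if s p.1 = p.2 then (1 : F) else 0) *
            (if J (glue p.1 p.2 fun i => s i.1) = p.1 then d (glue p.1 p.2 fun i => s i.1)
              else 0) = if s p.1 = p.2 ∧ J s = p.1 then d s else 0 := by
          rintro ⟨j, x, hx⟩
          by_cases h : s j = x
          · subst h; simp [hglue]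
          · simp [h]
        simp only [hterm]
        by_cases hs : d s = 0
        · simp [hs]
        have hmem : s (J s) ∈ A (J s) := mem_image_of_mem _ (by simp [hs])
        rw [Fintype.sum_eq_single ⟨J s, s (J s), hmem⟩ ?_, if_pos ⟨rfl, rfl⟩]
        rintro ⟨j, x, hx⟩ hne
        refine if_neg fun ⟨hsx, hj⟩ => hne ?_
        subst hj
        simp only at hsx
        simp [hsx]
    _ = ∑ j, #(A j) := by simp [Fintype.card_sigma]

end SliceRank

section Strings

variable {α β : Type*} [DecidableEq α] [DecidableEq β] {n : ℕ}

def letterCount (x : Fin n → α) (a : α) : ℕ := #{m | x m = a}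

def empiricalDist (x : Fin n → α) (a : α) : ℝ := letterCount x a / n

def empiricalEntropy (x : Fin n → α) : ℝ := ∑ a ∈ univ.image x, negMulLog (empiricalDist x a)

theorem letterCount_le (x : Fin n → α) (a : α) : letterCount x a ≤ n :=
  (card_filter_le _ _).trans_eq (card_fin n)

theorem empiricalDist_nonneg (x : Fin n → α) (a : α) : 0 ≤ empiricalDist x a := by
  unfold empiricalDist
  positivity

theorem empiricalDist_pos_of_mem {x : Fin n → α} {a : α} (ha : a ∈ univ.image x) :
    0 < empiricalDist x a := by
  obtain ⟨m, -, rfl⟩ := mem_image.1 ha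
  have : 0 < letterCount x (x m) := card_pos.2 ⟨m, by simp⟩
  have : 0 < n := m.pos
  unfold empiricalDist
  positivity

theorem letterCount_eq_zero_of_notMem {x : Fin n → α} {a : α} (ha : a ∉ univ.image x) :
    letterCount x a = 0 := by
  simpa [letterCount, filter_eq_empty_iff] using ha

theorem empiricalDist_eq_zero_of_notMem {x : Fin n → α} {a : α} (ha : a ∉ univ.image x) :
    empiricalDist x a = 0 := by
  simp [empiricalDist, letterCount_eq_zero_of_notMem ha]

theorem sum_letterCount_fiber {Γ : Finset α} {x : Fin n → α} (hx : ∀ m, x m ∈ Γ) (g : α → β)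
    (b : β) : ∑ a ∈ Γ with g a = b, letterCount x a = letterCount (fun m => g (x m)) b := by
  unfold letterCount
  rw [sum_card_fiberwise_eq_card_filter]
  congr 1
  ext m
  simp [hx m]

theorem sum_empiricalDist_fiber {Γ : Finset α} {x : Fin n → α} (hx : ∀ m, x m ∈ Γ) (g : α → β)
    (b : β) : ∑ a ∈ Γ with g a = b, empiricalDist x a = empiricalDist (fun m => g (x m)) b := by
  simp only [empiricalDist, ← sum_div, ← sum_letterCount_fiber hx g b, Nat.cast_sum]

theorem sum_letterCount {Γ : Finset α} {x : Fin n → α} (hx : ∀ m, x m ∈ Γ) :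
    ∑ a ∈ Γ, letterCount x a = n := by
  unfold letterCount
  simp [sum_card_fiberwise_eq_card_filter, hx]

theorem sum_empiricalDist {Γ : Finset α} {x : Fin n → α} (hn : 0 < n) (hx : ∀ m, x m ∈ Γ) :
    ∑ a ∈ Γ, empiricalDist x a = 1 := by
  simp only [empiricalDist]
  rw [← sum_div, ← Nat.cast_sum, sum_letterCount hx]
  exact div_self (by positivity)

theorem letterCount_comp_injective {f : α → β} (hf : Function.Injective f) (x : Fin n → α)
    (a : α) : letterCount (f ∘ x) (f a) = letterCount x a := by
  simp [letterCount, hf.eq_iff]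

theorem empiricalEntropy_comp_injective {f : α → β} (hf : Function.Injective f)
    (x : Fin n → α) : empiricalEntropy (f ∘ x) = empiricalEntropy x := by
  rw [empiricalEntropy, ← image_image, sum_image hf.injOn]
  simp [empiricalEntropy, empiricalDist, letterCount_comp_injective hf]

theorem prod_empiricalDist_eq_exp (x : Fin n → α) :
    ∏ m, empiricalDist x (x m) = exp (-(empiricalEntropy x * n)) := by
  rw [prod_comp, empiricalEntropy, sum_mul, ← sum_neg_distrib, exp_sum]
  refine prod_congr rfl fun a ha => ?_
  rw [← letterCount, ← exp_log (empiricalDist_pos_of_mem ha), ← exp_nat_mul,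
    exp_log (empiricalDist_pos_of_mem ha)]
  have hn : (n : ℝ) ≠ 0 := by
    obtain ⟨m, -, -⟩ := mem_image.1 ha
    exact_mod_cast m.pos.ne'
  congr 1
  simp only [negMulLog, empiricalDist]
  field_simp

end Strings

section TypeClasses

variable {α : Type*} [Fintype α] [DecidableEq α] {n : ℕ}

theorem prod_comp_eq_prod_pow_letterCount {M : Type*} [CommMonoid M] (x : Fin n → α)
    (f : α → M) : ∏ m, f (x m) = ∏ a, f a ^ letterCount x a := by
  rw [prod_comp]
  exact prod_subset (subset_univ _) fun a _ ha => by
    rw [← letterCount, letterCount_eq_zero_of_notMem ha, pow_zero]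

theorem card_typeClass_le (hn : 0 < n) (x : Fin n → α) :
    (#{y : Fin n → α | letterCount y = letterCount x} : ℝ) ≤ exp (empiricalEntropy x * n) := by
  -- under the product measure `w ^ ⊗ n`, each string of the type class of `x` has mass `e^{-nH(x)}`
  set w := empiricalDist x
  have hclass : ∀ y ∈ ({y | letterCount y = letterCount x} : Finset (Fin n → α)),
      ∏ m, w (y m) = exp (-(empiricalEntropy x * n)) := fun y hy => by
    rw [prod_comp_eq_prod_pow_letterCount, (mem_filter.1 hy).2,
      ← prod_comp_eq_prod_pow_letterCount, prod_empiricalDist_eq_exp]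
  have htotal : ∑ y : Fin n → α, ∏ m, w (y m) = 1 := by
    rw [← Fintype.piFinset_univ, ← prod_univ_sum]
    simp [w, sum_empiricalDist hn (Γ := univ) (fun m => mem_univ _)]
  have hle : (#{y : Fin n → α | letterCount y = letterCount x} : ℝ) *
      exp (-(empiricalEntropy x * n)) ≤ 1 := by
    rw [← htotal, ← nsmul_eq_mul, ← sum_const, ← sum_congr rfl hclass]
    exact sum_le_sum_of_subset_of_nonneg (subset_univ _) fun y _ _ =>
      prod_nonneg fun m _ => empiricalDist_nonneg x _
  rwa [exp_neg, ← div_eq_mul_inv, div_le_one (exp_pos _)] at hle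

theorem card_empiricalEntropy_le (hn : 0 < n) (H : ℝ) :
    (#{x : Fin n → α | empiricalEntropy x ≤ H} : ℝ) ≤
      (n + 1) ^ Fintype.card α * exp (H * n) := by
  set B : Finset (Fin n → α) := {x | empiricalEntropy x ≤ H}
  have htypes : #(B.image letterCount) ≤ (n + 1) ^ Fintype.card α := by
    calc #(B.image letterCount) ≤ #(Fintype.piFinset fun _ : α => range (n + 1)) := by
          refine card_le_card fun v hv => ?_
          obtain ⟨x, -, rfl⟩ := mem_image.1 hv
          simpa [Nat.lt_succ_iff] using fun a => letterCount_le x a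
      _ = (n + 1) ^ Fintype.card α := by simp
  have hfiber : ∀ v ∈ B.image letterCount,
      (#{x ∈ B | letterCount x = v} : ℝ) ≤ exp (H * n) := by
    intro v hv
    obtain ⟨x, hx, rfl⟩ := mem_image.1 hv
    calc (#{y ∈ B | letterCount y = letterCount x} : ℝ)
        ≤ #{y : Fin n → α | letterCount y = letterCount x} := by
          exact_mod_cast card_le_card (filter_subset_filter _ (subset_univ _))
      _ ≤ exp (empiricalEntropy x * n) := card_typeClass_le hn x
      _ ≤ exp (H * n) := by gcongr; exact (mem_filter.1 hx).2
  calc (#B : ℝ) = ∑ v ∈ B.image letterCount, (#{x ∈ B | letterCount x = v} : ℝ) := by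
        exact_mod_cast card_eq_sum_card_image letterCount B
    _ ≤ #(B.image letterCount) * exp (H * n) := by
        simpa using sum_le_card_nsmul _ _ _ hfiber
    _ ≤ (n + 1) ^ Fintype.card α * exp (H * n) := by gcongr; exact_mod_cast htypes

end TypeClasses

section Entropy

variable {ι : Type*} [Fintype ι]

theorem margEnt_eq_sum_negMulLog (Δ : Finset (ι → ℤ)) (p : (ι → ℤ) → ℝ) (i : ι) :
    margEnt Δ p i = ∑ a ∈ Δ.image (· i), negMulLog (∑ γ ∈ Δ with γ i = a, p γ) := by
  simp [margEnt, negMulLog_eq_neg, sum_neg_distrib]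

theorem margEnt_le_card {Δ : Finset (ι → ℤ)} {p : (ι → ℤ) → ℝ} (hp : ∀ γ, 0 ≤ p γ)
    (i : ι) : margEnt Δ p i ≤ #Δ := by
  rw [margEnt_eq_sum_negMulLog]
  calc _ ≤ ∑ _a ∈ Δ.image (· i), (1 : ℝ) := sum_le_sum fun a _ => by
        have hq : 0 ≤ ∑ γ ∈ Δ with γ i = a, p γ := sum_nonneg fun γ _ => hp γ
        linarith [negMulLog_le_one_sub_self hq]
    _ ≤ #Δ := by simpa using card_image_le

theorem iInf_margEnt_le_HSet [Nonempty ι] {Δ : Finset (ι → ℤ)} {p : (ι → ℤ) → ℝ}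
    (hp : ∀ γ, 0 ≤ p γ) (hpΔ : ∀ γ, p γ ≠ 0 → γ ∈ Δ) (hp1 : ∑ γ ∈ Δ, p γ = 1) :
    ⨅ i, margEnt Δ p i ≤ HSet Δ := by
  refine le_csSup ⟨#Δ, ?_⟩ ⟨p, hp, hpΔ, hp1, rfl⟩
  rintro e ⟨q, hq, -, -, rfl⟩
  obtain ⟨i⟩ := ‹Nonempty ι›
  exact (ciInf_le (Set.finite_range _).bddBelow i).trans (margEnt_le_card hq i)

theorem margEnt_empiricalDist {n : ℕ} {Γ : Finset (ι → ℤ)} {x : Fin n → ι → ℤ}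
    (hx : ∀ m, x m ∈ Γ) (i : ι) : margEnt Γ (empiricalDist x) i = empiricalEntropy (x · i) := by
  rw [margEnt_eq_sum_negMulLog, empiricalEntropy]
  simp only [sum_empiricalDist_fiber hx (· i)]
  refine (sum_subset ?_ fun a _ ha => ?_).symm
  · intro a ha
    obtain ⟨m, -, rfl⟩ := mem_image.1 ha
    exact mem_image_of_mem _ (hx m)
  · rw [empiricalDist_eq_zero_of_notMem ha, negMulLog_zero]

theorem iInf_margEnt_empiricalDist_le_HSet [Nonempty ι] {n : ℕ} (hn : 0 < n)
    {Γ : Finset (ι → ℤ)} {x : Fin n → ι → ℤ} (hx : ∀ m, x m ∈ Γ) :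
    ⨅ i, margEnt Γ (empiricalDist x) i ≤ HSet Γ := by
  refine iInf_margEnt_le_HSet (empiricalDist_nonneg x) (fun γ hγ => ?_)
    (sum_empiricalDist hn hx)
  by_contra hγΓ
  refine hγ (empiricalDist_eq_zero_of_notMem fun h => hγΓ ?_)
  obtain ⟨m, -, rfl⟩ := mem_image.1 h
  exact hx m

end Entropy

section TensorPower

variable {k n : ℕ} {F : Type*} [Field F] {S : Fin k → Finset ℤ}

def column (u : ∀ i, Fin n → {x : ℤ // x ∈ S i}) (m : Fin n) : Fin k → ℤ := fun i => u i m

theorem column_mem_support {c : (∀ i, {x : ℤ // x ∈ S i}) → F}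
    {u : ∀ i, Fin n → {x : ℤ // x ∈ S i}} (hu : tpow c n u ≠ 0) (m : Fin n) :
    column u m ∈ support S c := by
  rw [tpow, prod_ne_zero_iff] at hu
  exact mem_image_of_mem _ (by simpa using hu m (mem_univ m))

theorem empiricalEntropy_le_HSet_of_isMin {c : (∀ i, {x : ℤ // x ∈ S i}) → F}
    {u : ∀ i, Fin n → {x : ℤ // x ∈ S i}} (hn : 0 < n) (hu : tpow c n u ≠ 0) {j : Fin k}
    (hj : ∀ i, empiricalEntropy (u j) ≤ empiricalEntropy (u i)) :
    empiricalEntropy (u j) ≤ HSet (support S c) := by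
  have : Nonempty (Fin k) := ⟨j⟩
  have hrow : ∀ i,
      margEnt (support S c) (empiricalDist (column u)) i = empiricalEntropy (u i) := fun i =>
    (margEnt_empiricalDist (column_mem_support hu) i).trans
      (empiricalEntropy_comp_injective Subtype.val_injective (u i))
  calc empiricalEntropy (u j) ≤ ⨅ i, margEnt (support S c) (empiricalDist (column u)) i :=
        le_ciInf fun i => (hrow i).symm ▸ hj i
    _ ≤ HSet (support S c) := iInf_margEnt_empiricalDist_le_HSet hn (column_mem_support hu)

theorem card_slice_le (c : (∀ i, {x : ℤ // x ∈ S i}) → F) (hn : 0 < n)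
    {J : (∀ i, Fin n → {x : ℤ // x ∈ S i}) → Fin k}
    (hJ : ∀ (u : ∀ i, Fin n → {x : ℤ // x ∈ S i}) i,
      empiricalEntropy (u (J u)) ≤ empiricalEntropy (u i)) (j : Fin k) :
    (#(image (· j) {u | tpow c n u ≠ 0 ∧ J u = j}) : ℝ) ≤
      (n + 1) ^ #(S j) * exp (HSet (support S c) * n) := by
  have hslice : image (· j) {u | tpow c n u ≠ 0 ∧ J u = j} ⊆
      ({x | empiricalEntropy x ≤ HSet (support S c)} : Finset (Fin n → {x : ℤ // x ∈ S j})) := by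
    intro x hx
    obtain ⟨u, hu, rfl⟩ := mem_image.1 hx
    obtain ⟨hcu, rfl⟩ := (mem_filter.1 hu).2
    exact mem_filter.2 ⟨mem_univ _, empiricalEntropy_le_HSet_of_isMin hn hcu (hJ u)⟩
  rw [← Fintype.card_coe (S j)]
  exact (Nat.cast_le.2 (card_le_card hslice)).trans (card_empiricalEntropy_le hn _)

end TensorPower

theorem eventually_sum_pow_le_exp {ι : Type*} (s : Finset ι) (d : ι → ℕ) {ε : ℝ} (hε : 0 < ε) :
    ∀ᶠ n : ℕ in atTop, ∑ j ∈ s, ((n : ℝ) + 1) ^ d j ≤ exp (ε * n) := by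
  have hshift : Tendsto (fun n : ℕ => (n : ℝ) + 1) atTop atTop :=
    tendsto_atTop_add_const_right _ 1 tendsto_natCast_atTop_atTop
  have hexp : (fun n : ℕ => exp (ε * ((n : ℝ) + 1))) =O[atTop] fun n => exp (ε * n) := by
    simpa [mul_add, exp_add, mul_comm] using
      isBigO_const_mul_self (exp ε) (fun n : ℕ => exp (ε * n)) atTop
  have hterm : ∀ j ∈ s, (fun n : ℕ => ((n : ℝ) + 1) ^ d j) =o[atTop] fun n => exp (ε * n) :=
    fun j _ => ((isLittleO_pow_exp_pos_mul_atTop (d j) hε).comp_tendsto hshift).trans_isBigO hexp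
  filter_upwards [(IsLittleO.sum hterm).bound one_pos] with n hn
  rwa [one_mul, Finset.sum_apply, norm_of_nonneg (by positivity),
    norm_of_nonneg (exp_pos _).le] at hn

theorem stmt5_general {k : ℕ} (hk : 1 ≤ k) (F : Type*) [Field F]
    (S : Fin k → Finset ℤ)
    (c : (∀ i, {x : ℤ // x ∈ S i}) → F) :
    ∀ ε : ℝ, 0 < ε → ∃ N : ℕ, ∀ n ≥ N,
      (sliceRank F (fun i => Fin n → {x : ℤ // x ∈ S i}) (tpow c n) : ℝ) ≤
        Real.exp ((HSet (support S c) + ε) * n) := by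
  intro ε hε
  have : Nonempty (Fin k) := ⟨⟨0, hk⟩⟩
  obtain ⟨N, hN⟩ := eventually_atTop.1
    ((eventually_sum_pow_le_exp univ (fun j => #(S j)) hε).and (eventually_gt_atTop 0))
  refine ⟨N, fun n hNn => ?_⟩
  obtain ⟨hpoly, hn⟩ := hN n hNn
  choose J hJ using fun u : ∀ i, Fin n → {x : ℤ // x ∈ S i} =>
    Finite.exists_min fun i => empiricalEntropy (u i)
  calc (sliceRank F (fun i => Fin n → {x : ℤ // x ∈ S i}) (tpow c n) : ℝ)
      ≤ ∑ j, (#(image (· j) {u | tpow c n u ≠ 0 ∧ J u = j}) : ℝ) := by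
        exact_mod_cast sliceRank_le_sum_card_image _ J
    _ ≤ ∑ j, ((n : ℝ) + 1) ^ #(S j) * exp (HSet (support S c) * n) :=
        sum_le_sum fun j _ => card_slice_le c hn hJ j
    _ ≤ exp (ε * n) * exp (HSet (support S c) * n) := by
        rw [← sum_mul]
        exact mul_le_mul_of_nonneg_right hpoly (exp_pos _).le
    _ = exp ((HSet (support S c) + ε) * n) := by rw [← exp_add, add_mul, add_comm]

/-- Tao–Sawin upper bound: for nonzero `c` with support `Γ`,
`sliceRank(c^{⊗n}) ≤ exp((H(Γ) + ε) n)` eventually. -/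
theorem stmt5 {k : ℕ} (hk : 1 ≤ k) (F : Type*) [Field F]
    (S : Fin k → Finset ℤ) (hS : ∀ i, (S i).Nonempty)
    (c : (∀ i, {x : ℤ // x ∈ S i}) → F) (hc : c ≠ 0) :
    ∀ ε : ℝ, 0 < ε → ∃ N : ℕ, ∀ n ≥ N,
      (sliceRank F (fun i => Fin n → {x : ℤ // x ∈ S i}) (tpow c n) : ℝ) ≤
        Real.exp ((HSet (support S c) + ε) * n) :=
  stmt5_general hk F S c
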